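/- Let u : ℝ → ℝ be a convex function, let 0 be a differentiability point of u, and suppose u is differentiable at x > 0. Write u'' = μ + Σₙ aₙ δ_{qₙ} with μ non-atomic. Then the Lebesgue measure of the image u'([0,x]) (the set of derivative values attained at differentiability points of [0,x]) equals μ([0,x]). -/

import Mathlib

open MeasureTheory Filter Function Set
open scoped Topology

/-! The derivative of `u` at a differentiability point `y` is `g y`, and since the left
derivative of `u` at `y` is `leftLim g y`, `u` is differentiable exactly where `g` is left
continuous. So we measure the values of `g` at its continuity points in `[0, x]`. Up to countably
many points these fill `(g 0, g x]` minus the disjoint open gaps `(leftLim g q, g q)` at the jumps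
`q ∈ (0, x]`, whose total length is the atomic part `νa (0, x]` of `g.measure`. What remains has
length `g.measure (0, x] - νa (0, x] = μ (0, x] = μ [0, x]`. -/

namespace ConvexOn

variable {u : ℝ → ℝ} {g : StieltjesFunction ℝ}

lemma slope_le_of_hasDerivWithinAt_Ioi (hu : ConvexOn ℝ univ u) {y z g' : ℝ}
    (hz : HasDerivWithinAt u g' (Ioi z) z) (hyz : y < z) : slope u y z ≤ g' :=
  calc slope u y z ≤ derivWithin u (Iio z) z :=
        hu.slope_le_leftDeriv_of_mem_interior (mem_univ y) (by simp) hyz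
    _ ≤ derivWithin u (Ioi z) z := hu.leftDeriv_le_rightDeriv_of_mem_interior (by simp)
    _ = g' := hz.derivWithin (uniqueDiffWithinAt_Ioi z)

lemma hasDerivWithinAt_Iio_leftLim (hu : ConvexOn ℝ univ u)
    (hg : ∀ y, HasDerivWithinAt u (g y) (Ioi y) y) (y : ℝ) :
    HasDerivWithinAt u (leftLim g y) (Iio y) y := by
  have hcont : ContinuousAt u y := (hu.continuousOn isOpen_univ).continuousAt univ_mem
  have slope_le : ∀ s < y, slope u s y ≤ leftLim g y := by
    intro s hs
    have hslope : ContinuousAt (slope u s) y := by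
      simp only [slope_fun_def_field]
      exact (hcont.sub continuousAt_const).div (continuousAt_id.sub continuousAt_const)
        (sub_ne_zero.2 hs.ne')
    refine le_of_tendsto (hslope.continuousWithinAt (s := Iio y)).tendsto ?_
    filter_upwards [Ioo_mem_nhdsLT hs] with t ht
    exact (hu.slope_le_of_hasDerivWithinAt_Ioi (hg t) ht.1).trans (g.mono.le_leftLim ht.2)
  rw [hasDerivWithinAt_iff_tendsto_slope' self_notMem_Iio]
  refine tendsto_of_tendsto_of_tendsto_of_le_of_le' (g.mono.tendsto_leftLim y)
    tendsto_const_nhds ?_ ?_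
  · filter_upwards [self_mem_nhdsWithin] with s (hs : s < y)
    rw [slope_comm]
    exact hu.le_slope_of_hasDerivWithinAt_Ioi (mem_univ s) (mem_univ y) hs (hg s)
  · filter_upwards [self_mem_nhdsWithin] with s (hs : s < y)
    rw [slope_comm]
    exact slope_le s hs

lemma differentiableAt_iff_leftLim_eq (hu : ConvexOn ℝ univ u)
    (hg : ∀ y, HasDerivWithinAt u (g y) (Ioi y) y) {y : ℝ} :
    DifferentiableAt ℝ u y ↔ leftLim g y = g y := by
  have hleft := hu.hasDerivWithinAt_Iio_leftLim hg y
  constructor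
  · intro hd
    calc leftLim g y = deriv u y :=
          (uniqueDiffWithinAt_Iio y).eq_deriv _ hleft hd.hasDerivAt.hasDerivWithinAt
      _ = g y := (uniqueDiffWithinAt_Ioi y).eq_deriv _ hd.hasDerivAt.hasDerivWithinAt (hg y)
  · intro h
    rw [h] at hleft
    have := hleft.union (hg y)
    rw [Iio_union_Ioi, compl_eq_univ_sdiff, hasDerivWithinAt_sdiff_singleton,
      hasDerivWithinAt_univ] at this
    exact this.differentiableAt

lemma image_deriv_setOf_differentiableAt (hu : ConvexOn ℝ univ u)
    (hg : ∀ y, HasDerivWithinAt u (g y) (Ioi y) y) (s : Set ℝ) :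
    deriv u '' {y ∈ s | DifferentiableAt ℝ u y} = g '' {y ∈ s | leftLim g y = g y} := by
  simp_rw [hu.differentiableAt_iff_leftLim_eq hg]
  refine image_congr fun y hy => ?_
  have hd := (hu.differentiableAt_iff_leftLim_eq hg).2 hy.2
  exact (uniqueDiffWithinAt_Ioi y).eq_deriv _ hd.hasDerivAt.hasDerivWithinAt (hg y)

end ConvexOn

namespace StieltjesFunction

variable (g : StieltjesFunction ℝ)

lemma apply_notMem_Ioo_leftLim (y q : ℝ) : g y ∉ Ioo (leftLim g q) (g q) := fun h =>
  (lt_or_ge y q).elim (fun hyq => (g.mono.le_leftLim hyq).not_gt h.1)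
    (fun hqy => (g.mono hqy).not_gt h.2)

lemma pairwise_disjoint_Ioo_leftLim : Pairwise (Disjoint on fun q => Ioo (leftLim g q) (g q)) :=
  (pairwise_disjoint_on _).2 fun _ _ hpq =>
    (Ioc_disjoint_Ioc_of_le (g.mono.le_leftLim hpq)).mono Ioo_subset_Ioc_self Ioo_subset_Ioc_self

lemma volume_biUnion_Ioo_leftLim {T : Set ℝ} (hT : T.Countable) :
    volume (⋃ q ∈ T, Ioo (leftLim g q) (g q)) = g.measure T := by
  have hgap (q : T) : volume (Ioo (leftLim g q) (g q)) = g.measure {(q : ℝ)} := by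
    rw [Real.volume_Ioo, g.measure_singleton]
  rw [measure_biUnion hT (g.pairwise_disjoint_Ioo_leftLim.set_pairwise T)
      fun _ _ => measurableSet_Ioo, tsum_congr hgap,
    ← measure_biUnion hT (fun _ _ _ _ hpq => disjoint_singleton.2 hpq)
      fun q _ => measurableSet_singleton q, biUnion_of_singleton]

lemma biUnion_Ioo_leftLim_subset_Ioc {a b : ℝ} {T : Set ℝ} (hT : T ⊆ Ioc a b) :
    ⋃ q ∈ T, Ioo (leftLim g q) (g q) ⊆ Ioc (g a) (g b) :=
  iUnion₂_subset fun _ hq _ hv =>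
    ⟨(g.mono.le_leftLim (hT hq).1).trans_lt hv.1, hv.2.le.trans (g.mono (hT hq).2)⟩

lemma exists_mem_Ioc_leftLim_le_le {a b v : ℝ} (hv : v ∈ Ioc (g a) (g b)) :
    ∃ y ∈ Ioc a b, leftLim g y ≤ v ∧ v ≤ g y := by
  set E := {t ∈ Icc a b | g t ≤ v}
  have hab : a ≤ b := g.mono.reflect_lt (hv.1.trans_le hv.2) |>.le
  have haE : a ∈ E := ⟨⟨le_rfl, hab⟩, hv.1.le⟩
  have hE : BddAbove E := ⟨b, fun t ht => ht.1.2⟩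
  set y := sSup E
  have hay : a ≤ y := le_csSup hE haE
  have hyb : y ≤ b := csSup_le ⟨a, haE⟩ fun t ht => ht.1.2
  have hlt : ∀ t ∈ Ioc y b, v < g t := fun t ht =>
    not_le.1 fun htv => ht.1.not_ge (le_csSup hE ⟨⟨hay.trans ht.1.le, ht.2⟩, htv⟩)
  have hv_le : v ≤ g y := by
    rcases hyb.eq_or_lt with hyb | hyb
    · exact hyb ▸ hv.2
    refine ge_of_tendsto ((g.right_continuous y).mono Ioi_subset_Ici_self).tendsto ?_
    filter_upwards [Ioo_mem_nhdsGT hyb] with t ht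
    exact (hlt t ⟨ht.1, ht.2.le⟩).le
  have hay' : a < y := hay.lt_of_ne fun h => (h ▸ hv.1).not_ge hv_le
  refine ⟨y, ⟨hay', hyb⟩, le_of_tendsto (g.mono.tendsto_leftLim y) ?_, hv_le⟩
  filter_upwards [self_mem_nhdsWithin] with s (hs : s < y)
  obtain ⟨t, htE, hst⟩ := exists_lt_of_lt_csSup ⟨a, haE⟩ hs
  exact (g.mono hst.le).trans htE.2

theorem volume_image_setOf_leftLim_eq_add_measure {a b : ℝ} {T : Set ℝ} (hT : T.Countable)
    (hTab : T ⊆ Ioc a b) (hjump : ∀ q ∈ Ioc a b, leftLim g q < g q → q ∈ T) :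
    volume (g '' {y ∈ Icc a b | leftLim g y = g y}) + g.measure T = g.measure (Ioc a b) := by
  set G := ⋃ q ∈ T, Ioo (leftLim g q) (g q)
  have hsub : g '' {y ∈ Icc a b | leftLim g y = g y} ⊆ Icc (g a) (g b) \ G := by
    rintro _ ⟨y, ⟨hy, -⟩, rfl⟩
    refine ⟨⟨g.mono hy.1, g.mono hy.2⟩, ?_⟩
    simp only [G, mem_iUnion₂, not_exists]
    exact fun q _ => g.apply_notMem_Ioo_leftLim y q
  have hsup : Ioc (g a) (g b) \ ⋃ q ∈ T, Icc (leftLim g q) (g q) ⊆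
      g '' {y ∈ Icc a b | leftLim g y = g y} := by
    rintro v ⟨hv, hvT⟩
    obtain ⟨y, hy, hyv, hvy⟩ := g.exists_mem_Ioc_leftLim_le_le hv
    have hcont : leftLim g y = g y := (g.mono.leftLim_le le_rfl).eq_or_lt.resolve_right
      fun hlt => hvT (mem_biUnion (hjump y hy hlt) ⟨hyv, hvy⟩)
    exact ⟨y, ⟨Ioc_subset_Icc_self hy, hcont⟩, le_antisymm (hcont ▸ hyv) hvy⟩
  have hae : Ioc (g a) (g b) \ ⋃ q ∈ T, Icc (leftLim g q) (g q) =ᵐ[volume] Ioc (g a) (g b) \ G :=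
    ae_eq_refl _ |>.diff (Filter.EventuallyEq.countable_bUnion hT fun _ _ => Ioo_ae_eq_Icc).symm
  have hvol : volume (g '' {y ∈ Icc a b | leftLim g y = g y}) = volume (Ioc (g a) (g b) \ G) :=
    le_antisymm
      ((measure_mono hsub).trans_eq (measure_congr (Ioc_ae_eq_Icc.diff (ae_eq_refl _))).symm)
      ((measure_congr hae).symm.le.trans (measure_mono hsup))
  have hG : MeasurableSet G := MeasurableSet.biUnion hT fun _ _ => measurableSet_Ioo
  calc volume (g '' {y ∈ Icc a b | leftLim g y = g y}) + g.measure T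
      = volume (Ioc (g a) (g b) \ G) + volume (Ioc (g a) (g b) ∩ G) := by
        rw [hvol, inter_eq_right.2 (g.biUnion_Ioo_leftLim_subset_Ioc hTab),
          g.volume_biUnion_Ioo_leftLim hT]
    _ = g.measure (Ioc a b) := by
        rw [measure_sdiff_add_inter _ hG, Real.volume_Ioc, g.measure_Ioc]

end StieltjesFunction

theorem stmt4_general (u : ℝ → ℝ) (g : StieltjesFunction ℝ) (x : ℝ)
    (μ νa : Measure ℝ)
    (hu : ConvexOn ℝ Set.univ u)
    (hg : ∀ y, HasDerivWithinAt u (g y) (Set.Ioi y) y)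
    (hdecomp : g.measure = μ + νa)
    (hμ : ∀ y : ℝ, μ {y} = 0)
    (hνa : ∃ S : Set ℝ, S.Countable ∧ νa Sᶜ = 0) :
    volume (deriv u '' {y ∈ Set.Icc 0 x | DifferentiableAt ℝ u y}) = μ (Set.Icc 0 x) := by
  obtain ⟨S, hS, hSc⟩ := hνa
  have : NullSingletonClass μ := ⟨hμ⟩
  have hjump : ∀ q, leftLim g q < g q → q ∈ S := by
    intro q hq
    by_contra hqS
    have hq0 : g.measure {q} = 0 := by
      rw [hdecomp, Measure.add_apply, hμ, measure_mono_null (singleton_subset_iff.2 hqS) hSc,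
        add_zero]
    rw [g.measure_singleton, ENNReal.ofReal_eq_zero, sub_nonpos] at hq0
    exact hq0.not_gt hq
  have key := g.volume_image_setOf_leftLim_eq_add_measure (a := 0) (b := x)
    (hS.mono inter_subset_left) inter_subset_right fun q hq hlt => ⟨hjump q hlt, hq⟩
  have hatoms : g.measure (S ∩ Ioc 0 x) = νa (Ioc 0 x) := by
    rw [hdecomp, Measure.add_apply, (hS.mono inter_subset_left).measure_zero, zero_add,
      inter_comm, measure_inter_conull hSc]
  have hfin : νa (Ioc 0 x) ≠ ⊤ := by
    refine ne_top_of_le_ne_top (g.measure_Ioc 0 x ▸ ENNReal.ofReal_ne_top) ?_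
    rw [hdecomp, Measure.add_apply]
    exact le_add_self
  rw [hatoms, hdecomp, Measure.add_apply, ENNReal.add_left_inj hfin] at key
  rw [hu.image_deriv_setOf_differentiableAt hg, key, measure_congr Ioc_ae_eq_Icc]

/-- Let `u : ℝ → ℝ` be convex with right derivative the Stieltjes function `g`,
differentiable at `0` and at `x > 0`. Decompose the second derivative measure
`g.measure = μ + νa` with `μ` non-atomic and `νa` purely atomic. Then the Lebesgue
measure of the set of derivative values attained at differentiability points of `[0,x]`
equals `μ([0,x])`. -/
theorem stmt4 (u : ℝ → ℝ) (g : StieltjesFunction ℝ) (x : ℝ)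
    (μ νa : Measure ℝ)
    (hu : ConvexOn ℝ Set.univ u)
    (hg : ∀ y, HasDerivWithinAt u (g y) (Set.Ioi y) y)
    (hx : 0 < x)
    (h0 : DifferentiableAt ℝ u 0) (hxd : DifferentiableAt ℝ u x)
    (hdecomp : g.measure = μ + νa)
    (hμ : ∀ y : ℝ, μ {y} = 0)
    (hνa : ∃ S : Set ℝ, S.Countable ∧ νa Sᶜ = 0) :
    volume (deriv u '' {y ∈ Set.Icc 0 x | DifferentiableAt ℝ u y}) = μ (Set.Icc 0 x) :=
  stmt4_general u g x μ νa hu hg hdecomp hμ hνa
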